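/- Let M > 0, a > d+1 > d. Let A be a finite subset of ℤ^d and let Γ^r(A) be the partition of A constructed by the multiscale procedure: at step n ≥ 1, remove from the remaining set A_n those components A_n^G (G a connected component of the graph on the rn-cubes covering A_n, with edges between cubes at distance ≤ M·2^(arn)) satisfying |V(A_n^G)| ≤ 2^(rn(d+1)). Then Γ^r(A) is an (M,a)-partition: it partitions A, and any two distinct elements γ̄, γ̄' satisfy dist(γ̄, γ̄') > M·min{|V(γ̄)|, |V(γ̄')|}^(a/(d+1)). -/

import Mathlib

/-- ℓ¹ distance on `ℤ^d`. -/
def ell1 (d : ℕ) (x y : Fin d → ℤ) : ℤ := ∑ i, |x i - y i|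

/-- Minimal ℓ¹-distance between two subsets of `ℤ^d` (as a real number). -/
noncomputable def setDistR (d : ℕ) (S T : Set (Fin d → ℤ)) : ℝ :=
  sInf {t : ℝ | ∃ x ∈ S, ∃ y ∈ T, t = ((ell1 d x y : ℤ) : ℝ)}

/-- The volume `V(Λ) = ℤ^d` minus the unbounded nearest-neighbor connected components
of `Λᶜ`; equivalently, `Λ` together with the points of `Λᶜ` whose connected component in
`Λᶜ` is finite. -/
def volume (d : ℕ) (Λ : Set (Fin d → ℤ)) : Set (Fin d → ℤ) :=
  Λ ∪ {y | y ∉ Λ ∧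
        Set.Finite {z | Relation.ReflTransGen
          (fun u v => u ∉ Λ ∧ v ∉ Λ ∧ ell1 d u v = 1) y z}}

/-- The index of the dyadic `m`-cube containing `y`. -/
def cubeIdx (d m : ℕ) (y : Fin d → ℤ) : Fin d → ℤ := fun i => Int.fdiv (y i) (2 ^ m)

/-- The dyadic `m`-cube with index `x`: `∏_i [2^m x_i, 2^m(x_i+1)) ∩ ℤ^d`. -/
def dyadicCube (d m : ℕ) (x : Fin d → ℤ) : Set (Fin d → ℤ) :=
  {y | cubeIdx d m y = x}

/-- Adjacency of `m`-cubes in the covering of `S`: both cubes meet `S` and their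
distance is at most `M·2^(a·m)`. -/
noncomputable def cubeRel (d m : ℕ) (M a : ℝ) (S : Set (Fin d → ℤ))
    (c c' : Fin d → ℤ) : Prop :=
  c ∈ cubeIdx d m '' S ∧ c' ∈ cubeIdx d m '' S ∧
    setDistR d (dyadicCube d m c) (dyadicCube d m c') ≤ M * (2 : ℝ) ^ (a * m)

/-- The part of `S` covered by the connected component (of the graph of `m`-cubes
covering `S`) containing the cube of `z`. -/
noncomputable def pieceAt (d m : ℕ) (M a : ℝ) (S : Set (Fin d → ℤ)) (z : Fin d → ℤ) :
    Set (Fin d → ℤ) :=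
  {w ∈ S | Relation.ReflTransGen (cubeRel d m M a S) (cubeIdx d m z) (cubeIdx d m w)}

/-- A piece removed at step `n` (scale `rn`): a connected-component part of `S` whose
volume has at most `2^(rn(d+1))` points. -/
noncomputable def isSmallPiece (d r : ℕ) (M a : ℝ) (n : ℕ) (S γ : Set (Fin d → ℤ)) :
    Prop :=
  (∃ z ∈ S, γ = pieceAt d (r * n) M a S z) ∧
    (volume d γ).ncard ≤ 2 ^ (r * n * (d + 1))

/-- The set remaining after the first `n` steps of the multiscale procedure
(`remA A 0 = A₁ = A`). -/
noncomputable def remA (d r : ℕ) (M a : ℝ) (A : Set (Fin d → ℤ)) :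
    ℕ → Set (Fin d → ℤ)
  | 0 => A
  | n + 1 => remA d r M a A n \
      ⋃₀ {γ | isSmallPiece d r M a (n + 1) (remA d r M a A n) γ}

/-- The multiscale partition `Γ^r(A)`: all pieces removed at some step. -/
noncomputable def msPartition (d r : ℕ) (M a : ℝ) (A : Set (Fin d → ℤ)) :
    Set (Set (Fin d → ℤ)) :=
  {γ | ∃ n : ℕ, isSmallPiece d r M a (n + 1) (remA d r M a A n) γ}

/- ---------------- basic lemmas ---------------- -/

lemma ell1_nonneg (d : ℕ) (x y : Fin d → ℤ) : 0 ≤ ell1 d x y :=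
  Finset.sum_nonneg fun _ _ => abs_nonneg _

lemma ell1_symm (d : ℕ) (x y : Fin d → ℤ) : ell1 d x y = ell1 d y x := by
  unfold ell1; congr 1; ext i; rw [abs_sub_comm]

lemma setDistR_symm (d : ℕ) (S T : Set (Fin d → ℤ)) : setDistR d S T = setDistR d T S := by
  unfold setDistR; congr 1; ext t
  constructor
  · rintro ⟨x, hx, y, hy, rfl⟩; exact ⟨y, hy, x, hx, by rw [ell1_symm]⟩
  · rintro ⟨x, hx, y, hy, rfl⟩; exact ⟨y, hy, x, hx, by rw [ell1_symm]⟩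

lemma setDistR_bddBelow (d : ℕ) (S T : Set (Fin d → ℤ)) :
    BddBelow {t : ℝ | ∃ x ∈ S, ∃ y ∈ T, t = ((ell1 d x y : ℤ) : ℝ)} := by
  refine ⟨0, ?_⟩
  rintro t ⟨x, hx, y, hy, rfl⟩
  exact_mod_cast ell1_nonneg d x y

lemma setDistR_le (d : ℕ) {S T : Set (Fin d → ℤ)} {x y : Fin d → ℤ}
    (hx : x ∈ S) (hy : y ∈ T) : setDistR d S T ≤ ((ell1 d x y : ℤ) : ℝ) :=
  csInf_le (setDistR_bddBelow d S T) ⟨x, hx, y, hy, rfl⟩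

lemma setDistR_witness (d : ℕ) {S T : Set (Fin d → ℤ)} (hS : S.Finite) (hT : T.Finite)
    (hS' : S.Nonempty) (hT' : T.Nonempty) :
    ∃ x ∈ S, ∃ y ∈ T, setDistR d S T = ((ell1 d x y : ℤ) : ℝ) := by
  have hEq : {t : ℝ | ∃ x ∈ S, ∃ y ∈ T, t = ((ell1 d x y : ℤ) : ℝ)} =
      (fun p : (Fin d → ℤ) × (Fin d → ℤ) => ((ell1 d p.1 p.2 : ℤ) : ℝ)) '' (S ×ˢ T) := by
    ext t
    constructor
    · rintro ⟨x, hx, y, hy, rfl⟩; exact ⟨(x, y), ⟨hx, hy⟩, rfl⟩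
    · rintro ⟨⟨x, y⟩, ⟨hx, hy⟩, rfl⟩; exact ⟨x, hx, y, hy, rfl⟩
  have hfin : {t : ℝ | ∃ x ∈ S, ∃ y ∈ T, t = ((ell1 d x y : ℤ) : ℝ)}.Finite := by
    rw [hEq]; exact (hS.prod hT).image _
  have hne : {t : ℝ | ∃ x ∈ S, ∃ y ∈ T, t = ((ell1 d x y : ℤ) : ℝ)}.Nonempty := by
    obtain ⟨x, hx⟩ := hS'; obtain ⟨y, hy⟩ := hT'
    exact ⟨_, x, hx, y, hy, rfl⟩
  exact hne.csInf_mem hfin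

/- ---------------- volume lemmas ---------------- -/

lemma subset_volume (d : ℕ) (Λ : Set (Fin d → ℤ)) : Λ ⊆ volume d Λ :=
  Set.subset_union_left

lemma volume_mono (d : ℕ) {γ A : Set (Fin d → ℤ)} (h : γ ⊆ A) :
    volume d γ ⊆ volume d A := by
  rintro y (hy | ⟨hy, hfin⟩)
  · exact Or.inl (h hy)
  · by_cases hyA : y ∈ A
    · exact Or.inl hyA
    · refine Or.inr ⟨hyA, hfin.subset ?_⟩
      intro z hz
      exact Relation.ReflTransGen.mono
        (fun u v (huv : u ∉ A ∧ v ∉ A ∧ ell1 d u v = 1) => (⟨fun h' => huv.1 (h h'), fun h' => huv.2.1 (h h'), huv.2.2⟩ : u ∉ γ ∧ v ∉ γ ∧ ell1 d u v = 1)) _ _ hz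

lemma ray_infinite (d : ℕ) (A : Set (Fin d → ℤ)) (R : ℤ)
    (hbound : ∀ x ∈ A, ∀ i, |x i| ≤ R) (y : Fin d → ℤ) (i : Fin d) (s : ℤ)
    (hs : s = 1 ∨ s = -1)
    (habs : ∀ k : ℕ, R < |y i + k * s|) :
    {z | Relation.ReflTransGen
      (fun u v => u ∉ A ∧ v ∉ A ∧ ell1 d u v = 1) y z}.Infinite := by
  set z : ℕ → (Fin d → ℤ) := fun k => Function.update y i (y i + k * s) with hzdef
  have hzi : ∀ k : ℕ, z k i = y i + k * s := fun k => Function.update_self i _ y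
  have hzj : ∀ (k : ℕ) (j : Fin d), j ≠ i → z k j = y j := fun k j hj =>
    Function.update_of_ne hj _ y
  have hznA : ∀ k, z k ∉ A := by
    intro k hk
    have h1 := hbound (z k) hk i
    rw [hzi k] at h1
    exact absurd h1 (not_le.2 (habs k))
  have hstep : ∀ k : ℕ, ell1 d (z k) (z (k+1)) = 1 := by
    intro k
    unfold ell1
    have hterm : ∀ j, |z k j - z (k+1) j| = if j = i then 1 else 0 := by
      intro j
      by_cases hji : j = i
      · subst hji
        rw [if_pos rfl, hzi k, hzi (k+1)]
        have h2 : y j + (k : ℤ) * s - (y j + ((k : ℕ) + 1 : ℕ) * s) = -s := by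
          push_cast; ring
        rw [h2]
        rcases hs with h | h <;> rw [h] <;> norm_num
      · rw [if_neg hji, hzj k j hji, hzj (k+1) j hji, sub_self, abs_zero]
    rw [Finset.sum_congr rfl fun j _ => hterm j]
    simp
  have hreach : ∀ k : ℕ, Relation.ReflTransGen
      (fun u v => u ∉ A ∧ v ∉ A ∧ ell1 d u v = 1) y (z k) := by
    intro k
    induction k with
    | zero =>
      have hz0 : z 0 = y := by
        funext j
        by_cases hji : j = i
        · subst hji; rw [hzi 0]; push_cast; ring
        · exact hzj 0 j hji
      rw [hz0]
    | succ k ih => exact ih.tail ⟨hznA k, hznA (k+1), hstep k⟩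
  have hinj : Function.Injective z := by
    intro k l hkl
    have h3 : z k i = z l i := by rw [hkl]
    rw [hzi k, hzi l] at h3
    rcases hs with h | h <;> rw [h] at h3 <;> omega
  exact Set.infinite_of_injective_forall_mem (f := z) hinj fun k => hreach k

lemma volume_finite (d : ℕ) {A : Set (Fin d → ℤ)} (hA : A.Finite) :
    (volume d A).Finite := by
  classical
  set R : ℤ := ((hA.toFinset.sup fun x => (∑ i, |x i|).toNat : ℕ) : ℤ) with hR
  have hbound : ∀ x ∈ A, ∀ i, |x i| ≤ R := by
    intro x hx i
    have h1 : |x i| ≤ ∑ j, |x j| :=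
      Finset.single_le_sum (fun j _ => abs_nonneg (x j)) (Finset.mem_univ i)
    have h2 : (∑ j, |x j|) ≤ ((∑ j, |x j|).toNat : ℤ) := Int.self_le_toNat _
    have h3 : ((∑ j, |x j|).toNat : ℕ) ≤ (hA.toFinset.sup fun x => (∑ i, |x i|).toNat) :=
      Finset.le_sup (f := fun x => (∑ i, |x i|).toNat) (hA.mem_toFinset.2 hx)
    calc |x i| ≤ ((∑ j, |x j|).toNat : ℤ) := h1.trans h2
      _ ≤ R := by rw [hR]; exact_mod_cast h3
  have hsub : volume d A ⊆ Set.pi Set.univ fun _ => Set.Icc (-R) R := by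
    rintro y (hy | ⟨hy, hfin⟩)
    · rw [Set.mem_univ_pi]; intro i; exact abs_le.1 (hbound y hy i)
    · rw [Set.mem_univ_pi]
      intro i
      by_contra hcon
      rw [Set.mem_Icc, ← abs_le] at hcon
      push_neg at hcon
      have hkcast : ∀ k : ℕ, (0:ℤ) ≤ (k:ℤ) := fun k => Int.natCast_nonneg k
      rcases le_or_gt 0 (y i) with h0 | h0
      · refine ray_infinite d A R hbound y i 1 (Or.inl rfl) ?_ hfin
        intro k
        have h4 : |y i + (k:ℤ) * 1| = y i + k := by
          rw [mul_one]; exact abs_of_nonneg (by linarith [hkcast k])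
        rw [h4]
        rw [abs_of_nonneg h0] at hcon
        linarith [hkcast k]
      · refine ray_infinite d A R hbound y i (-1) (Or.inr rfl) ?_ hfin
        intro k
        have h4 : |y i + (k:ℤ) * (-1)| = -(y i) + k := by
          rw [show y i + (k:ℤ) * (-1) = -(-(y i) + k) by ring, abs_neg]
          exact abs_of_nonneg (by linarith [hkcast k])
        rw [h4]
        rw [abs_of_neg h0] at hcon
        linarith [hkcast k]
  exact Set.Finite.subset (Set.Finite.pi fun _ => Set.finite_Icc _ _) hsub

/- ---------------- piece lemmas ---------------- -/

lemma cubeRel_symm (d m : ℕ) (M a : ℝ) (S : Set (Fin d → ℤ)) :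
    Symmetric (cubeRel d m M a S) := by
  rintro c c' ⟨h1, h2, h3⟩
  exact ⟨h2, h1, by rwa [setDistR_symm]⟩

lemma mem_dyadicCube_self (d m : ℕ) (y : Fin d → ℤ) :
    y ∈ dyadicCube d m (cubeIdx d m y) := rfl

lemma pieceAt_subset (d m : ℕ) (M a : ℝ) (S : Set (Fin d → ℤ)) (z : Fin d → ℤ) :
    pieceAt d m M a S z ⊆ S := fun _ hw => hw.1

lemma mem_pieceAt_self (d m : ℕ) (M a : ℝ) {S : Set (Fin d → ℤ)} {z : Fin d → ℤ}
    (hz : z ∈ S) : z ∈ pieceAt d m M a S z := ⟨hz, Relation.ReflTransGen.refl⟩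

lemma pieceAt_eq_of_inter (d m : ℕ) (M a : ℝ) (S : Set (Fin d → ℤ)) {z z' w : Fin d → ℤ}
    (hw : w ∈ pieceAt d m M a S z) (hw' : w ∈ pieceAt d m M a S z') :
    pieceAt d m M a S z = pieceAt d m M a S z' := by
  haveI : Std.Symm (cubeRel d m M a S) := ⟨fun x y h => cubeRel_symm d m M a S h⟩
  have hsymm : Symmetric (Relation.ReflTransGen (cubeRel d m M a S)) :=
    fun x y h => Std.Symm.symm x y h
  have hzz' : Relation.ReflTransGen (cubeRel d m M a S) (cubeIdx d m z) (cubeIdx d m z') :=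
    hw.2.trans (hsymm hw'.2)
  ext w'
  constructor
  · rintro ⟨h1, h2⟩; exact ⟨h1, (hsymm hzz').trans h2⟩
  · rintro ⟨h1, h2⟩; exact ⟨h1, hzz'.trans h2⟩

/- ---------------- remA lemmas ---------------- -/

lemma remA_succ_subset (d r : ℕ) (M a : ℝ) (A : Set (Fin d → ℤ)) (n : ℕ) :
    remA d r M a A (n+1) ⊆ remA d r M a A n := Set.diff_subset

lemma remA_antitone (d r : ℕ) (M a : ℝ) (A : Set (Fin d → ℤ)) {n n' : ℕ} (h : n ≤ n') :
    remA d r M a A n' ⊆ remA d r M a A n := by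
  induction n' with
  | zero => rw [Nat.le_zero.1 h]
  | succ k ih =>
    rcases Nat.lt_or_ge n (k+1) with hlt | hge
    · exact (remA_succ_subset d r M a A k).trans (ih (Nat.lt_succ_iff.1 hlt))
    · rw [Nat.le_antisymm h hge]

lemma remA_subset (d r : ℕ) (M a : ℝ) (A : Set (Fin d → ℤ)) (n : ℕ) :
    remA d r M a A n ⊆ A := remA_antitone d r M a A (Nat.zero_le n)

lemma smallPiece_subset (d r : ℕ) (M a : ℝ) {n : ℕ} {S γ : Set (Fin d → ℤ)}
    (h : isSmallPiece d r M a n S γ) : γ ⊆ S := by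
  obtain ⟨⟨z, _, rfl⟩, _⟩ := h
  exact pieceAt_subset _ _ _ _ _ _

lemma smallPiece_disjoint_next (d r : ℕ) (M a : ℝ) (A : Set (Fin d → ℤ)) {n : ℕ}
    {γ : Set (Fin d → ℤ)} (h : isSmallPiece d r M a (n+1) (remA d r M a A n) γ) :
    γ ∩ remA d r M a A (n+1) = ∅ := by
  rw [Set.eq_empty_iff_forall_notMem]
  rintro w ⟨hwγ, hwS, hwnot⟩
  exact hwnot ⟨γ, h, hwγ⟩


lemma disjoint_core (d r : ℕ) (M a : ℝ) (A : Set (Fin d → ℤ)) {n n' : ℕ}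
    {γ γ' : Set (Fin d → ℤ)} (hnn : n ≤ n')
    (hγ : isSmallPiece d r M a (n+1) (remA d r M a A n) γ)
    (hγ' : isSmallPiece d r M a (n'+1) (remA d r M a A n') γ')
    (hne : γ ≠ γ') : γ ∩ γ' = ∅ := by
  rcases Nat.eq_or_lt_of_le hnn with heq | hlt
  · subst heq
    obtain ⟨⟨z, hz, rfl⟩, _⟩ := hγ
    obtain ⟨⟨z', hz', rfl⟩, _⟩ := hγ'
    rw [Set.eq_empty_iff_forall_notMem]
    rintro w ⟨hw, hw'⟩
    exact hne (pieceAt_eq_of_inter _ _ _ _ _ hw hw')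
  · have h1 : γ' ⊆ remA d r M a A (n+1) :=
      (smallPiece_subset d r M a hγ').trans (remA_antitone d r M a A hlt)
    have h2 := smallPiece_disjoint_next d r M a A hγ
    rw [Set.eq_empty_iff_forall_notMem] at h2 ⊢
    rintro w ⟨hw, hw'⟩
    exact h2 w ⟨hw, h1 hw'⟩

lemma dist_core (d r : ℕ) (M a : ℝ) (hM : 0 < M) (A : Set (Fin d → ℤ)) (hA : A.Finite)
    {n n' : ℕ} {γ γ' : Set (Fin d → ℤ)} (hnn : n ≤ n')
    (hγ : isSmallPiece d r M a (n+1) (remA d r M a A n) γ)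
    (hγ' : isSmallPiece d r M a (n'+1) (remA d r M a A n') γ')
    (hne : γ ≠ γ') :
    M * (2 : ℝ) ^ (a * ((r * (n+1) : ℕ) : ℝ)) < setDistR d γ γ' := by
  set m : ℕ := r * (n+1) with hm
  set S : Set (Fin d → ℤ) := remA d r M a A n with hS
  have hdisj : γ ∩ γ' = ∅ := disjoint_core d r M a A hnn hγ hγ' hne
  have hγS : γ ⊆ S := smallPiece_subset d r M a hγ
  have hγ'S : γ' ⊆ S :=
    (smallPiece_subset d r M a hγ').trans (remA_antitone d r M a A hnn)
  have hSA : S ⊆ A := remA_subset d r M a A n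
  have hγfin : γ.Finite := hA.subset (hγS.trans hSA)
  have hγ'fin : γ'.Finite := hA.subset (hγ'S.trans hSA)
  obtain ⟨⟨z, hzS, hγeq⟩, _⟩ := hγ
  obtain ⟨⟨z', hz'S', hγ'eq⟩, _⟩ := hγ'
  have hγne : γ.Nonempty := ⟨z, by rw [hγeq]; exact mem_pieceAt_self _ _ _ _ hzS⟩
  have hγ'ne : γ'.Nonempty := ⟨z', by rw [hγ'eq]; exact mem_pieceAt_self _ _ _ _ hz'S'⟩
  by_contra hcon
  push_neg at hcon
  obtain ⟨x, hx, y, hy, hdeq⟩ := setDistR_witness d hγfin hγ'fin hγne hγ'ne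
  have hcube : cubeRel d m M a S (cubeIdx d m x) (cubeIdx d m y) := by
    refine ⟨⟨x, hγS hx, rfl⟩, ⟨y, hγ'S hy, rfl⟩, ?_⟩
    refine le_trans (setDistR_le d (mem_dyadicCube_self d m x) (mem_dyadicCube_self d m y)) ?_
    rw [← hdeq]
    exact hcon
  have hyγ : y ∈ γ := by
    rw [hγeq] at hx ⊢
    exact ⟨hγ'S hy, hx.2.tail hcube⟩
  have : y ∈ γ ∩ γ' := ⟨hyγ, hy⟩
  rw [hdisj] at this
  exact this

lemma dist_part (d r : ℕ) (M a : ℝ) (hM : 0 < M) (ha : (d : ℝ) + 1 < a)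
    (A : Set (Fin d → ℤ)) (hA : A.Finite)
    {n n' : ℕ} {γ γ' : Set (Fin d → ℤ)} (hnn : n ≤ n')
    (hγ : isSmallPiece d r M a (n+1) (remA d r M a A n) γ)
    (hγ' : isSmallPiece d r M a (n'+1) (remA d r M a A n') γ')
    (hne : γ ≠ γ') :
    M * ((min ((volume d γ).ncard) ((volume d γ').ncard) : ℕ) : ℝ) ^ (a / ((d : ℝ) + 1))
      < setDistR d γ γ' := by
  have h1 := dist_core d r M a hM A hA hnn hγ hγ' hne
  refine lt_of_le_of_lt ?_ h1
  have hd1 : (0:ℝ) < (d:ℝ) + 1 := by positivity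
  have ha0 : (0:ℝ) < a := lt_trans hd1 ha
  set m : ℕ := r * (n+1) with hm
  have hminle : min ((volume d γ).ncard) ((volume d γ').ncard) ≤ 2 ^ (m * (d+1)) :=
    le_trans (min_le_left _ _) hγ.2
  have hcast : ((min ((volume d γ).ncard) ((volume d γ').ncard) : ℕ) : ℝ)
      ≤ (2:ℝ) ^ (m * (d+1)) := by
    calc ((min ((volume d γ).ncard) ((volume d γ').ncard) : ℕ) : ℝ)
        ≤ ((2 ^ (m * (d+1)) : ℕ) : ℝ) := Nat.cast_le.2 hminle
      _ = (2:ℝ) ^ (m * (d+1)) := by push_cast; ring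
  have h2 : ((min ((volume d γ).ncard) ((volume d γ').ncard) : ℕ) : ℝ) ^ (a / ((d:ℝ)+1))
      ≤ ((2:ℝ) ^ (m * (d+1))) ^ (a / ((d:ℝ)+1)) :=
    Real.rpow_le_rpow (Nat.cast_nonneg _) hcast (le_of_lt (div_pos ha0 hd1))
  have h3 : ((2:ℝ) ^ (m * (d+1))) ^ (a / ((d:ℝ)+1)) = (2:ℝ) ^ (a * (m:ℝ)) := by
    rw [← Real.rpow_natCast 2 (m * (d+1)), ← Real.rpow_mul (by norm_num : (0:ℝ) ≤ 2)]
    congr 1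
    have hd1' : (d:ℝ) + 1 ≠ 0 := ne_of_gt hd1
    push_cast
    field_simp
  rw [h3] at h2
  exact mul_le_mul_of_nonneg_left h2 (le_of_lt hM)

lemma remA_empty (d r : ℕ) (hd : 1 ≤ d) (hr : 1 ≤ r) (M a : ℝ)
    (A : Set (Fin d → ℤ)) (hA : A.Finite) :
    ∃ N, remA d r M a A N = ∅ := by
  set K : ℕ := (volume d A).ncard with hK
  refine ⟨K + 1, ?_⟩
  have hsmall : ∀ z ∈ remA d r M a A K,
      isSmallPiece d r M a (K+1) (remA d r M a A K)
        (pieceAt d (r*(K+1)) M a (remA d r M a A K) z) := by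
    intro z hz
    refine ⟨⟨z, hz, rfl⟩, ?_⟩
    have hsub : pieceAt d (r*(K+1)) M a (remA d r M a A K) z ⊆ A :=
      (pieceAt_subset _ _ _ _ _ _).trans (remA_subset d r M a A K)
    have hle : (volume d (pieceAt d (r*(K+1)) M a (remA d r M a A K) z)).ncard ≤ K :=
      Set.ncard_le_ncard (volume_mono d hsub) (volume_finite d hA)
    refine hle.trans ?_
    have he1 : K ≤ r * (K+1) * (d+1) := by
      have hmul : 1 * (K+1) * 1 ≤ r * (K+1) * (d+1) :=
        Nat.mul_le_mul (Nat.mul_le_mul hr le_rfl) (by omega)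
      omega
    calc K ≤ 2 ^ K := Nat.le_of_lt Nat.lt_two_pow_self
      _ ≤ 2 ^ (r * (K+1) * (d+1)) := Nat.pow_le_pow_right (by norm_num) (he1)
  rw [Set.eq_empty_iff_forall_notMem]
  rintro z ⟨hz1, hz2⟩
  exact hz2 ⟨_, hsmall z hz1, mem_pieceAt_self _ _ _ _ hz1⟩

/-- The multiscale procedure produces an `(M,a)`-partition of `A`: the pieces partition
`A`, and any two distinct pieces `γ̄, γ̄'` satisfy
`dist(γ̄,γ̄') > M·min{|V(γ̄)|,|V(γ̄')|}^(a/(d+1))`. -/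
theorem stmt13 (d r : ℕ) (hd : 1 ≤ d) (hr : 1 ≤ r) (M a : ℝ) (hM : 0 < M)
    (ha : (d : ℝ) + 1 < a) (A : Set (Fin d → ℤ)) (hA : A.Finite) :
    (⋃₀ msPartition d r M a A = A) ∧
    (∀ γ ∈ msPartition d r M a A, ∀ γ' ∈ msPartition d r M a A, γ ≠ γ' →
      γ ∩ γ' = ∅) ∧
    (∀ γ ∈ msPartition d r M a A, ∀ γ' ∈ msPartition d r M a A, γ ≠ γ' →
      M * ((min ((volume d γ).ncard) ((volume d γ').ncard) : ℕ) : ℝ) ^ (a / ((d : ℝ) + 1))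
        < setDistR d γ γ') := by
  obtain ⟨N, hN⟩ := remA_empty d r hd hr M a A hA
  have hcover : ∀ Nn, ∀ x ∈ A, x ∉ remA d r M a A Nn → x ∈ ⋃₀ msPartition d r M a A := by
    intro Nn
    induction Nn with
    | zero => intro x hx hnx; exact absurd hx hnx
    | succ k ih =>
      intro x hx hnx
      by_cases hk : x ∈ remA d r M a A k
      · have hxu : x ∈ ⋃₀ {γ | isSmallPiece d r M a (k+1) (remA d r M a A k) γ} := by
          by_contra hcon
          exact hnx ⟨hk, hcon⟩
        obtain ⟨γ, hγ, hxγ⟩ := hxu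
        exact ⟨γ, ⟨k, hγ⟩, hxγ⟩
      · exact ih x hx hk
  refine ⟨?_, ?_, ?_⟩
  · apply Set.Subset.antisymm
    · rintro x ⟨γ, ⟨n, hγ⟩, hx⟩
      exact remA_subset d r M a A n ((smallPiece_subset d r M a hγ) hx)
    · intro x hx
      refine hcover N x hx ?_
      rw [hN]
      exact Set.notMem_empty x
  · rintro γ ⟨n, hγ⟩ γ' ⟨n', hγ'⟩ hne
    rcases le_total n n' with h | h
    · exact disjoint_core d r M a A h hγ hγ' hne
    · rw [Set.inter_comm]
      exact disjoint_core d r M a A h hγ' hγ hne.symm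
  · rintro γ ⟨n, hγ⟩ γ' ⟨n', hγ'⟩ hne
    rcases le_total n n' with h | h
    · exact dist_part d r M a hM ha A hA h hγ hγ' hne
    · rw [setDistR_symm, min_comm]
      exact dist_part d r M a hM ha A hA h hγ' hγ hne.symm
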